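/- arXiv:2011.01295 — 5 statements merged into one kernel-verified Lean document; each statement's English description precedes it below -/
import Mathlib

section
/- Let u : I → ℂ be infinitely differentiable and satisfy (a(x)u'(x))' + k(x)u(x) = f(x) for all x ∈ I, let x_b ∈ I and let M ≥ 2 be an integer. Then, as h → 0, u(x_b + h) − [ u(x_b)·(1 + Σ_{j=2}^{M} E_{j,0}(x_b) h^j/j!) + u'(x_b)·(h + Σ_{j=2}^{M} E_{j,1}(x_b) h^j/j!) + Σ_{j=2}^{M} Σ_{ℓ=0}^{j−2} F_{j,ℓ}(x_b)·f^{(ℓ)}(x_b)·h^j/j! ] = O(h^{M+1}). -/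
open Filter Topology Asymptotics

/-- `Ecoef a k n = (E_{n+2,0}, E_{n+2,1})` from the recursion of the paper. -/
noncomputable def Ecoef (a : ℝ → ℝ) (k : ℝ → ℂ) : ℕ → (ℝ → ℂ) × (ℝ → ℂ)
  | 0 => (fun x => -k x / (a x : ℂ), fun x => -((deriv a x : ℝ) : ℂ) / (a x : ℂ))
  | n + 1 =>
      (fun x => deriv (Ecoef a k n).1 x - k x / (a x : ℂ) * (Ecoef a k n).2 x,
       fun x => (Ecoef a k n).1 x + deriv (Ecoef a k n).2 x
          - ((deriv a x : ℝ) : ℂ) / (a x : ℂ) * (Ecoef a k n).2 x)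

/-- `E_{j,0}` for `j ≥ 2` (junk value for `j < 2`). -/
noncomputable def Ej0 (a : ℝ → ℝ) (k : ℝ → ℂ) (j : ℕ) : ℝ → ℂ := (Ecoef a k (j - 2)).1

/-- `E_{j,1}` for `j ≥ 2` (junk value for `j < 2`). -/
noncomputable def Ej1 (a : ℝ → ℝ) (k : ℝ → ℂ) (j : ℕ) : ℝ → ℂ := (Ecoef a k (j - 2)).2

/-- `Fcoef a k n m = F_{n+2, m-1}` (second index shifted by one: `m = ℓ + 1`, `ℓ ≥ -1`). -/
noncomputable def Fcoef (a : ℝ → ℝ) (k : ℝ → ℂ) : ℕ → ℕ → ℝ → ℂ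
  | 0, 0 => fun x => (Ecoef a k 0).2 x / (a x : ℂ)
  | 0, 1 => fun x => 1 / (a x : ℂ)
  | 0, _ + 2 => fun _ => 0
  | n + 1, 0 => fun x => (Ecoef a k (n + 1)).2 x / (a x : ℂ)
  | n + 1, m + 1 => fun x => deriv (Fcoef a k n (m + 1)) x + Fcoef a k n m x

/-- `F_{j,ℓ}` for `j ≥ 2`, `ℓ ≥ 0` (junk value for `j < 2`). -/
noncomputable def Fjl (a : ℝ → ℝ) (k : ℝ → ℂ) (j ℓ : ℕ) : ℝ → ℂ := Fcoef a k (j - 2) (ℓ + 1)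

/-- `𝔈₀(h) = 1 + ∑_{j=2}^{B} E_{j,0}(x_b) h^j / j!`. -/
noncomputable def EPoly0 (a : ℝ → ℝ) (k : ℝ → ℂ) (xb : ℝ) (B : ℕ) (h : ℝ) : ℂ :=
  1 + ∑ j ∈ Finset.Icc 2 B, Ej0 a k j xb * (h : ℂ) ^ j / (Nat.factorial j : ℂ)

/-- `𝔈₁(h) = 1 + ∑_{j=2}^{B} E_{j,1}(x_b) h^(j-1) / j!`. -/
noncomputable def EPoly1 (a : ℝ → ℝ) (k : ℝ → ℂ) (xb : ℝ) (B : ℕ) (h : ℝ) : ℂ :=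
  1 + ∑ j ∈ Finset.Icc 2 B, Ej1 a k j xb * (h : ℂ) ^ (j - 1) / (Nat.factorial j : ℂ)

/-- `𝔉_ℓ(h) = ∑_{j=ℓ+2}^{B} F_{j,ℓ}(x_b) h^(j-ℓ-2) / j!`. -/
noncomputable def FPoly (a : ℝ → ℝ) (k : ℝ → ℂ) (xb : ℝ) (ℓ B : ℕ) (h : ℝ) : ℂ :=
  ∑ j ∈ Finset.Icc (ℓ + 2) B, Fjl a k j ℓ xb * (h : ℂ) ^ (j - ℓ - 2) / (Nat.factorial j : ℂ)

/-!
Differentiating the equation shows, by induction on `n`, that on `I` every derivative `u⁽ⁿ⁺²⁾`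
is the combination `E_{n+2,0} u + E_{n+2,1} u' + ∑_ℓ F_{n+2,ℓ} f⁽ˡ⁾`: differentiating such a
combination and eliminating `u'' = -(k/a) u - (a'/a) u' + f/a` by means of the equation
reproduces exactly the recursion defining `E` and `F`. With these values of the derivatives the
Taylor polynomial of `u` of order `M` at `x_b` is the truncated expansion, so Taylor's theorem
bounds the difference by `O(h^{M+1})`.
-/

open scoped ContDiff Nat

theorem taylor_isBigO_of_contDiffAt {E : Type*} [NormedAddCommGroup E] [NormedSpace ℝ E]
    {f : ℝ → E} {x₀ : ℝ} {n : ℕ} (hf : ContDiffAt ℝ (n + 1) f x₀) :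
    (fun h : ℝ => f (x₀ + h) -
        ∑ k ∈ Finset.range (n + 1), ((k ! : ℝ)⁻¹ * h ^ k) • iteratedDeriv k f x₀)
      =O[𝓝 0] fun h => h ^ (n + 1) := by
  obtain ⟨U, hU, hfU⟩ := hf.contDiffOn le_rfl (by simp)
  obtain ⟨ε, hε, hball⟩ := Metric.mem_nhds_iff.mp hU
  set B := Metric.ball x₀ ε
  have hx₀ : x₀ ∈ B := Metric.mem_ball_self hε
  have hlo := taylor_isLittleO (convex_ball x₀ ε) hx₀ (hfU.mono hball)
  rw [Metric.isOpen_ball.nhdsWithin_eq hx₀] at hlo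
  have htop : (fun x : ℝ => (((n + 1 : ℝ) * n !)⁻¹ * (x - x₀) ^ (n + 1)) •
      iteratedDerivWithin (n + 1) f B x₀) =O[𝓝 x₀] fun x => (x - x₀) ^ (n + 1) := by
    simpa using ((isBigO_refl (fun x : ℝ => (x - x₀) ^ (n + 1)) (𝓝 x₀)).const_mul_left
      ((n + 1 : ℝ) * n !)⁻¹).smul (isBigO_const_one ℝ (iteratedDerivWithin (n + 1) f B x₀) (𝓝 x₀))
  have hO : (fun x => f x - taylorWithinEval f n B x₀ x) =O[𝓝 x₀]
      fun x => (x - x₀) ^ (n + 1) := by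
    refine (hlo.isBigO.add htop).congr_left fun x => ?_
    simp only [taylorWithinEval_succ]
    abel
  have hshift : Tendsto (fun h : ℝ => x₀ + h) (𝓝 0) (𝓝 x₀) := by
    simpa using (continuous_const_add x₀).tendsto 0
  refine ((hO.comp_tendsto hshift).congr_left fun h => ?_).congr_right fun h => by simp
  simp only [Function.comp_apply, taylor_within_apply, add_sub_cancel_left]
  congr 1
  exact Finset.sum_congr rfl fun k _ => by
    rw [iteratedDerivWithin_of_isOpen Metric.isOpen_ball hx₀]

theorem ContDiffOn.iteratedDeriv_of_isOpen {𝕜 F : Type*} [NontriviallyNormedField 𝕜]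
    [NormedAddCommGroup F] [NormedSpace 𝕜 F] {f : 𝕜 → F} {s : Set 𝕜}
    (hf : ContDiffOn 𝕜 ∞ f s) (hs : IsOpen s) (n : ℕ) : ContDiffOn 𝕜 ∞ (iteratedDeriv n f) s := by
  induction n with
  | zero => simpa using hf
  | succ n ih => simpa only [iteratedDeriv_succ] using ih.deriv_of_isOpen hs le_rfl

section Helmholtz

variable {s : Set ℝ} {a : ℝ → ℝ} {k f u : ℝ → ℂ}

theorem ContDiffOn.div_ofReal {n : WithTop ℕ∞} {g : ℝ → ℂ} (hg : ContDiffOn ℝ n g s)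
    (ha : ContDiffOn ℝ n a s) (ha0 : ∀ x ∈ s, a x ≠ 0) :
    ContDiffOn ℝ n (fun x => g x / (a x : ℂ)) s := by
  simp only [div_eq_mul_inv]
  exact hg.mul ((Complex.ofRealCLM.contDiff.comp_contDiffOn ha).inv fun x hx => by
    simpa using ha0 x hx)

theorem Ecoef_contDiffOn (hs : IsOpen s) (ha : ContDiffOn ℝ ∞ a s) (hk : ContDiffOn ℝ ∞ k s)
    (ha0 : ∀ x ∈ s, a x ≠ 0) (n : ℕ) :
    ContDiffOn ℝ ∞ (Ecoef a k n).1 s ∧ ContDiffOn ℝ ∞ (Ecoef a k n).2 s := by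
  have ha' : ContDiffOn ℝ ∞ (fun x => ((deriv a x : ℝ) : ℂ)) s :=
    Complex.ofRealCLM.contDiff.comp_contDiffOn (ha.deriv_of_isOpen hs le_rfl)
  induction n with
  | zero => exact ⟨hk.neg.div_ofReal ha ha0, ha'.neg.div_ofReal ha ha0⟩
  | succ n ih =>
    exact ⟨(ih.1.deriv_of_isOpen hs le_rfl).sub ((hk.div_ofReal ha ha0).mul ih.2),
      (ih.1.add (ih.2.deriv_of_isOpen hs le_rfl)).sub ((ha'.div_ofReal ha ha0).mul ih.2)⟩

theorem Fcoef_contDiffOn (hs : IsOpen s) (ha : ContDiffOn ℝ ∞ a s) (hk : ContDiffOn ℝ ∞ k s)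
    (ha0 : ∀ x ∈ s, a x ≠ 0) (n m : ℕ) : ContDiffOn ℝ ∞ (Fcoef a k n m) s := by
  induction n generalizing m with
  | zero =>
    match m with
    | 0 => exact (Ecoef_contDiffOn hs ha hk ha0 0).2.div_ofReal ha ha0
    | 1 => exact contDiffOn_const.div_ofReal ha ha0
    | _ + 2 => exact contDiffOn_const
  | succ n ih =>
    match m with
    | 0 => exact (Ecoef_contDiffOn hs ha hk ha0 (n + 1)).2.div_ofReal ha ha0
    | m + 1 => exact ((ih (m + 1)).deriv_of_isOpen hs le_rfl).add (ih m)

theorem Fcoef_zero_right (n : ℕ) : Fcoef a k n 0 = fun x => (Ecoef a k n).2 x / (a x : ℂ) := by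
  cases n <;> rfl

theorem Fcoef_eq_zero_of_le {n m : ℕ} (hm : n + 2 ≤ m) : Fcoef a k n m = 0 := by
  induction n generalizing m with
  | zero =>
    obtain ⟨m, rfl⟩ := Nat.exists_eq_add_of_le' hm
    rfl
  | succ n ih =>
    obtain ⟨m, rfl⟩ := Nat.exists_eq_add_of_le' (by omega : 1 ≤ m)
    funext x
    simp [Fcoef, ih (m := m + 1) (by omega), ih (m := m) (by omega)]

theorem deriv_deriv_eq_of_helmholtz {x : ℝ} (ha : DifferentiableAt ℝ a x) (ha0 : a x ≠ 0)
    (hu : DifferentiableAt ℝ (deriv u) x)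
    (hueq : deriv (fun y => (a y : ℂ) * deriv u y) x + k x * u x = f x) :
    deriv (deriv u) x = -k x / a x * u x - deriv a x / a x * deriv u x + f x / a x := by
  have hprod : HasDerivAt (fun y => (a y : ℂ) * deriv u y)
      (deriv a x * deriv u x + a x * deriv (deriv u) x) x :=
    ha.hasDerivAt.ofReal_comp.mul hu.hasDerivAt
  rw [hprod.deriv] at hueq
  have ha0' : (a x : ℂ) ≠ 0 := by exact_mod_cast ha0
  field_simp
  linear_combination hueq

theorem hasDerivAt_sum_Fcoef_mul_iteratedDeriv (hs : IsOpen s) (ha : ContDiffOn ℝ ∞ a s)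
    (hk : ContDiffOn ℝ ∞ k s) (hf : ContDiffOn ℝ ∞ f s) (ha0 : ∀ x ∈ s, a x ≠ 0) (n : ℕ)
    {x : ℝ} (hx : x ∈ s) :
    HasDerivAt (fun y => ∑ ℓ ∈ Finset.range (n + 1), Fcoef a k n (ℓ + 1) y * iteratedDeriv ℓ f y)
      (∑ ℓ ∈ Finset.range (n + 2), Fcoef a k (n + 1) (ℓ + 1) x * iteratedDeriv ℓ f x
        - Fcoef a k n 0 x * f x) x := by
  set C := fun m => Fcoef a k n m
  set g := fun ℓ => iteratedDeriv ℓ f x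
  have hterm : ∀ ℓ ∈ Finset.range (n + 1), HasDerivAt (fun y => C (ℓ + 1) y * iteratedDeriv ℓ f y)
      (deriv (C (ℓ + 1)) x * g ℓ + C (ℓ + 1) x * g (ℓ + 1)) x := fun ℓ _ => by
    have hC := ((Fcoef_contDiffOn hs ha hk ha0 n (ℓ + 1)).differentiableOn (by simp)).hasDerivAt
      (hs.mem_nhds hx)
    have hg := ((hf.iteratedDeriv_of_isOpen hs ℓ).differentiableOn (by simp)).hasDerivAt
      (hs.mem_nhds hx)
    simpa only [g, iteratedDeriv_succ] using hC.fun_mul hg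
  refine (HasDerivAt.fun_sum hterm).congr_deriv ?_
  have htop : deriv (C (n + 2)) x = 0 := by simp [C, Fcoef_eq_zero_of_le le_rfl]
  change _ = ∑ ℓ ∈ Finset.range (n + 2), (deriv (C (ℓ + 1)) x + C ℓ x) * g ℓ - C 0 x * g 0
  simp only [add_mul, Finset.sum_add_distrib]
  rw [Finset.sum_range_succ (fun ℓ => deriv (C (ℓ + 1)) x * g ℓ) (n + 1), htop,
    Finset.sum_range_succ' (fun ℓ => C ℓ x * g ℓ)]
  ring

theorem hasDerivAt_Ecoef_mul_add_Ecoef_mul_deriv (hs : IsOpen s) (ha : ContDiffOn ℝ ∞ a s)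
    (hk : ContDiffOn ℝ ∞ k s) (ha0 : ∀ x ∈ s, a x ≠ 0) (hu : ContDiffOn ℝ ∞ u s)
    (hueq : ∀ x ∈ s, deriv (fun y => (a y : ℂ) * deriv u y) x + k x * u x = f x) (n : ℕ)
    {x : ℝ} (hx : x ∈ s) :
    HasDerivAt (fun y => (Ecoef a k n).1 y * u y + (Ecoef a k n).2 y * deriv u y)
      ((Ecoef a k (n + 1)).1 x * u x + (Ecoef a k (n + 1)).2 x * deriv u x
        + Fcoef a k n 0 x * f x) x := by
  have hasDerivAt_of_smooth {g : ℝ → ℂ} (hg : ContDiffOn ℝ ∞ g s) : HasDerivAt g (deriv g x) x :=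
    (hg.differentiableOn (by simp)).hasDerivAt (hs.mem_nhds hx)
  have hu' := hu.deriv_of_isOpen hs (m := ∞) le_rfl
  have hE := Ecoef_contDiffOn hs ha hk ha0 n
  have hu'' := deriv_deriv_eq_of_helmholtz
    ((ha.differentiableOn (by simp)).differentiableAt (hs.mem_nhds hx)) (ha0 x hx)
    (hasDerivAt_of_smooth hu').differentiableAt (hueq x hx)
  refine (((hasDerivAt_of_smooth hE.1).fun_mul (hasDerivAt_of_smooth hu)).fun_add
    ((hasDerivAt_of_smooth hE.2).fun_mul (hasDerivAt_of_smooth hu'))).congr_deriv ?_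
  rw [hu'', Fcoef_zero_right]
  simp only [Ecoef]
  ring

theorem iteratedDeriv_add_two_eq_of_helmholtz (hs : IsOpen s) (ha : ContDiffOn ℝ ∞ a s)
    (hk : ContDiffOn ℝ ∞ k s) (hf : ContDiffOn ℝ ∞ f s) (ha0 : ∀ x ∈ s, a x ≠ 0)
    (hu : ContDiffOn ℝ ∞ u s)
    (hueq : ∀ x ∈ s, deriv (fun y => (a y : ℂ) * deriv u y) x + k x * u x = f x)
    (n : ℕ) {x : ℝ} (hx : x ∈ s) :
    iteratedDeriv (n + 2) u x = (Ecoef a k n).1 x * u x + (Ecoef a k n).2 x * deriv u x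
      + ∑ ℓ ∈ Finset.range (n + 1), Fcoef a k n (ℓ + 1) x * iteratedDeriv ℓ f x := by
  induction n generalizing x with
  | zero =>
    have hu' := (hu.deriv_of_isOpen hs (m := ∞) le_rfl).differentiableOn (by simp)
    rw [iteratedDeriv_succ, iteratedDeriv_one, deriv_deriv_eq_of_helmholtz
      ((ha.differentiableOn (by simp)).differentiableAt (hs.mem_nhds hx)) (ha0 x hx)
      (hu'.differentiableAt (hs.mem_nhds hx)) (hueq x hx)]
    simp only [Ecoef, zero_add, Finset.range_one, Finset.sum_singleton, Fcoef, one_div,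
      iteratedDeriv_zero]
    ring
  | succ n ih =>
    have hnext := (hasDerivAt_Ecoef_mul_add_Ecoef_mul_deriv hs ha hk ha0 hu hueq n hx).fun_add
      (hasDerivAt_sum_Fcoef_mul_iteratedDeriv hs ha hk hf ha0 n hx)
    rw [iteratedDeriv_succ, Filter.EventuallyEq.deriv_eq
      (Filter.eventually_of_mem (hs.mem_nhds hx) fun y hy => ih hy), hnext.deriv]
    ring

theorem helmholtz_expansion_eq_taylor_sum {xb : ℝ} {M : ℕ} (hM : 1 ≤ M)
    (hder : ∀ n, iteratedDeriv (n + 2) u xb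
      = (Ecoef a k n).1 xb * u xb + (Ecoef a k n).2 xb * deriv u xb
        + ∑ ℓ ∈ Finset.range (n + 1), Fcoef a k n (ℓ + 1) xb * iteratedDeriv ℓ f xb) (h : ℝ) :
    u xb * (1 + ∑ j ∈ Finset.Icc 2 M, Ej0 a k j xb * (h : ℂ) ^ j / (Nat.factorial j : ℂ))
      + deriv u xb *
        ((h : ℂ) + ∑ j ∈ Finset.Icc 2 M, Ej1 a k j xb * (h : ℂ) ^ j / (Nat.factorial j : ℂ))
      + ∑ j ∈ Finset.Icc 2 M, ∑ ℓ ∈ Finset.range (j - 1),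
          Fjl a k j ℓ xb * iteratedDeriv ℓ f xb * (h : ℂ) ^ j / (Nat.factorial j : ℂ)
    = ∑ j ∈ Finset.range (M + 1), ((j ! : ℝ)⁻¹ * h ^ j) • iteratedDeriv j u xb := by
  have hterm : ∀ j ∈ Finset.Icc 2 M, ((j ! : ℝ)⁻¹ * h ^ j) • iteratedDeriv j u xb
      = u xb * (Ej0 a k j xb * (h : ℂ) ^ j / j !) + deriv u xb * (Ej1 a k j xb * (h : ℂ) ^ j / j !)
        + ∑ ℓ ∈ Finset.range (j - 1),
            Fjl a k j ℓ xb * iteratedDeriv ℓ f xb * (h : ℂ) ^ j / j ! := by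
    intro j hj
    obtain ⟨n, rfl⟩ : ∃ n, j = n + 2 := ⟨j - 2, by grind⟩
    simp only [Ej0, Ej1, Fjl, Nat.add_sub_cancel, Nat.add_sub_assoc one_le_two, hder,
      Complex.real_smul, ← Finset.sum_div, ← Finset.sum_mul]
    push_cast
    ring
  have hsplit : Finset.range (M + 1) = insert 0 (insert 1 (Finset.Icc 2 M)) := by
    ext j
    simp only [Finset.mem_range, Order.lt_add_one_iff, Finset.mem_insert, Finset.mem_Icc]
    omega
  rw [hsplit, Finset.sum_insert (by simp), Finset.sum_insert (by simp), Finset.sum_congr rfl hterm,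
    Finset.sum_add_distrib, Finset.sum_add_distrib, ← Finset.mul_sum, ← Finset.mul_sum]
  simp only [Nat.factorial_zero, Nat.cast_one, inv_one, pow_zero, mul_one, iteratedDeriv_zero,
    one_smul, Nat.factorial_one, pow_one, one_mul, iteratedDeriv_one, Complex.real_smul]
  ring

end Helmholtz

/-- Proposition 3.1(3.3), truncated form.  If `u` is smooth on the open
interval `I = (p, q)` and satisfies `(a u')' + k u = f` on `I`, then at a base point
`x_b ∈ I` the truncated solution expansion approximates `u(x_b + h)` to order `O(h^{M+1})`
as `h → 0`. -/
theorem truncated_solution_expansion_of_helmholtz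
    (p q : ℝ) (a : ℝ → ℝ) (k f u : ℝ → ℂ)
    (ha : ContDiffOn ℝ (⊤ : ℕ∞) a (Set.Ioo p q))
    (hk : ContDiffOn ℝ (⊤ : ℕ∞) k (Set.Ioo p q))
    (hf : ContDiffOn ℝ (⊤ : ℕ∞) f (Set.Ioo p q))
    (hapos : ∀ x ∈ Set.Ioo p q, 0 < a x)
    (hu : ContDiffOn ℝ (⊤ : ℕ∞) u (Set.Ioo p q))
    (hueq : ∀ x ∈ Set.Ioo p q,
      deriv (fun y => (a y : ℂ) * deriv u y) x + k x * u x = f x)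
    (xb : ℝ) (hxb : xb ∈ Set.Ioo p q) (M : ℕ) (hM : 2 ≤ M) :
    (fun h : ℝ => u (xb + h) -
        (u xb * (1 + ∑ j ∈ Finset.Icc 2 M, Ej0 a k j xb * (h : ℂ) ^ j / (Nat.factorial j : ℂ))
          + deriv u xb *
            ((h : ℂ) + ∑ j ∈ Finset.Icc 2 M, Ej1 a k j xb * (h : ℂ) ^ j / (Nat.factorial j : ℂ))
          + ∑ j ∈ Finset.Icc 2 M, ∑ ℓ ∈ Finset.range (j - 1),
              Fjl a k j ℓ xb * iteratedDeriv ℓ f xb * (h : ℂ) ^ j / (Nat.factorial j : ℂ)))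
      =O[𝓝 (0 : ℝ)] fun h : ℝ => h ^ (M + 1) := by
  have ha0 : ∀ x ∈ Set.Ioo p q, a x ≠ 0 := fun x hx => (hapos x hx).ne'
  have hder := fun n => iteratedDeriv_add_two_eq_of_helmholtz isOpen_Ioo ha hk hf ha0 hu hueq n hxb
  have hTaylor := taylor_isBigO_of_contDiffAt (n := M)
    ((hu.contDiffAt (isOpen_Ioo.mem_nhds hxb)).of_le (by exact_mod_cast le_top))
  refine hTaylor.congr_left fun h => ?_
  rw [helmholtz_expansion_eq_taylor_sum (by omega) hder h]
end

section
/- Let a and κ be positive real constants, x_b ∈ ℝ, m ∈ ℕ, and let u : ℝ → ℂ be twice differentiable. Write ĥ := κh/√a. (i) If a·u''(x) + κ²·u(x) = (x − x_b)^{2m} for all x ∈ ℝ, then for every real h ≠ 0: u(x_b+h) = u(x_b)·cos(ĥ) + u'(x_b)·(√a/κ)·sin(ĥ) + (2m)!·h^{2m+2}·( cos(ĥ) − Σ_{j=0}^{m} (−1)^j ĥ^{2j}/(2j)! ) / ( (−1)^{m+1}·a·ĥ^{2m+2} ). (ii) If a·u''(x) + κ²·u(x) = (x − x_b)^{2m+1}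 for all x ∈ ℝ, then for every real h ≠ 0: u(x_b+h) = u(x_b)·cos(ĥ) + u'(x_b)·(√a/κ)·sin(ĥ) + (2m+1)!·h^{2m+3}·( sin(ĥ) − Σ_{j=0}^{m} (−1)^j ĥ^{2j+1}/(2j+1)! ) / ( (−1)^{m+1}·a·ĥ^{2m+3} ). -/
/-!
Put `ω = κ / √a`, so that the equation reads `u'' + ω² u = (x - x_b)^ℓ / a`. For a solution `w`
of `w'' = -ω² w`, both `ω cos θ • w - sin θ • w'` and `ω sin θ • w + cos θ • w'`, with
`θ = ω (x - x₀)`, have zero derivative; eliminating `w'` gives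
`w (x₀ + h) = cos (ω h) w x₀ + sin (ω h) / ω • w' x₀`.
A particular solution with zero Cauchy data at `x_b` comes from the Taylor remainders
`C_n t = cos t - ∑_{j<n} (-1)^j t^{2j} / (2j)!` and `S_n t = sin t - ∑_{j<n} (-1)^j t^{2j+1} / (2j+1)!`:
since `S_n' = C_n` and `C_{n+1}' = -S_n`, the functions `C_{m+1}` and `S_{m+1}` satisfy
`f'' + f = (-1)^{m+1} t^ℓ / ℓ!` for `ℓ = 2m` and `ℓ = 2m + 1` respectively and vanish to
second order at `0`; rescaling `t = ω (x - x_b)` turns them into solutions of the equation.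
-/

open Real Finset
open scoped Nat

theorem hasDerivAt_mul_sub_const (ω x₀ x : ℝ) : HasDerivAt (fun y => ω * (y - x₀)) ω x := by
  simpa using ((hasDerivAt_id x).sub_const x₀).const_mul ω

theorem eq_cos_smul_add_sin_smul_of_hasDerivAt {E : Type*} [NormedAddCommGroup E]
    [NormedSpace ℝ E] {ω : ℝ} (hω : ω ≠ 0) {w w' : ℝ → E}
    (hw : ∀ x, HasDerivAt w (w' x) x) (hw' : ∀ x, HasDerivAt w' (-ω ^ 2 • w x) x)
    (x₀ h : ℝ) :
    w (x₀ + h) = cos (ω * h) • w x₀ + (sin (ω * h) / ω) • w' x₀ := by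
  have hθ := hasDerivAt_mul_sub_const ω x₀
  set A : ℝ → E := fun x => (ω * cos (ω * (x - x₀))) • w x - sin (ω * (x - x₀)) • w' x
  set B : ℝ → E := fun x => (ω * sin (ω * (x - x₀))) • w x + cos (ω * (x - x₀)) • w' x
  have hA : ∀ x, HasDerivAt A 0 x := fun x => by
    refine ((((hθ x).cos.const_mul ω).smul (hw x)).sub ((hθ x).sin.smul (hw' x))).congr_deriv ?_
    module
  have hB : ∀ x, HasDerivAt B 0 x := fun x => by
    refine ((((hθ x).sin.const_mul ω).smul (hw x)).add ((hθ x).cos.smul (hw' x))).congr_deriv ?_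
    module
  have hconst : ∀ {F : ℝ → E}, (∀ x, HasDerivAt F 0 x) → F (x₀ + h) = F x₀ := fun hF =>
    is_const_of_deriv_eq_zero (fun x => (hF x).differentiableAt) (fun x => (hF x).deriv) _ _
  have hA0 := hconst hA
  have hB0 := hconst hB
  simp only [A, B, add_sub_cancel_left, sub_self, mul_zero, cos_zero, sin_zero, mul_one,
    zero_smul, one_smul, sub_zero, zero_add] at hA0 hB0
  apply smul_right_injective E hω
  simp only [smul_add, smul_smul ω, mul_div_cancel₀ _ hω]
  linear_combination (norm := module) cos (ω * h) • hA0 + sin (ω * h) • hB0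
    - (cos_sq_add_sin_sq (ω * h)) • (ω • w (x₀ + h))

theorem hasDerivAt_pow_succ_div_factorial (k : ℕ) (t : ℝ) :
    HasDerivAt (fun t : ℝ => t ^ (k + 1) / (k + 1)!) (t ^ k / k !) t := by
  refine ((hasDerivAt_pow (k + 1) t).div_const _).congr_deriv ?_
  rw [Nat.factorial_succ]
  push_cast
  field_simp

noncomputable def cosTaylorRem (n : ℕ) (t : ℝ) : ℝ :=
  cos t - ∑ j ∈ range n, (-1) ^ j * t ^ (2 * j) / (2 * j)!

noncomputable def sinTaylorRem (n : ℕ) (t : ℝ) : ℝ :=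
  sin t - ∑ j ∈ range n, (-1) ^ j * t ^ (2 * j + 1) / (2 * j + 1)!

theorem cosTaylorRem_succ (n : ℕ) (t : ℝ) :
    cosTaylorRem (n + 1) t = cosTaylorRem n t - (-1) ^ n * (t ^ (2 * n) / (2 * n)!) := by
  rw [cosTaylorRem, cosTaylorRem, sum_range_succ]
  ring

theorem sinTaylorRem_succ (n : ℕ) (t : ℝ) :
    sinTaylorRem (n + 1) t = sinTaylorRem n t - (-1) ^ n * (t ^ (2 * n + 1) / (2 * n + 1)!) := by
  rw [sinTaylorRem, sinTaylorRem, sum_range_succ]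
  ring

theorem cosTaylorRem_succ_zero (n : ℕ) : cosTaylorRem (n + 1) 0 = 0 := by
  simp [cosTaylorRem, sum_range_succ', pow_mul]

theorem sinTaylorRem_zero (n : ℕ) : sinTaylorRem n 0 = 0 := by
  simp [sinTaylorRem]

theorem hasDerivAt_sinTaylorRem (n : ℕ) (t : ℝ) :
    HasDerivAt (sinTaylorRem n) (cosTaylorRem n t) t := by
  induction n with
  | zero =>
    rw [show sinTaylorRem 0 = sin from funext fun s => by simp [sinTaylorRem]]
    simpa [cosTaylorRem] using hasDerivAt_sin t
  | succ n ih =>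
    rw [funext (sinTaylorRem_succ n), cosTaylorRem_succ]
    exact ih.sub ((hasDerivAt_pow_succ_div_factorial (2 * n) t).const_mul _)

theorem hasDerivAt_cosTaylorRem_succ (n : ℕ) (t : ℝ) :
    HasDerivAt (cosTaylorRem (n + 1)) (-sinTaylorRem n t) t := by
  induction n with
  | zero =>
    rw [show cosTaylorRem 1 = fun s => cos s - 1 from funext fun s => by simp [cosTaylorRem]]
    simpa [sinTaylorRem] using (hasDerivAt_cos t).sub_const 1
  | succ n ih =>
    rw [funext (cosTaylorRem_succ (n + 1)), sinTaylorRem_succ, neg_sub', sub_neg_eq_add]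
    have := (hasDerivAt_pow_succ_div_factorial (2 * n + 1) t).const_mul ((-1 : ℝ) ^ (n + 1))
    refine ih.sub this |>.congr_deriv ?_
    ring

theorem sub_eq_cos_smul_add_sin_smul_of_helmholtz {a κ ω : ℝ} (ha : a ≠ 0) (hω : ω ≠ 0)
    (hκω : κ ^ 2 = a * ω ^ 2) {u : ℝ → ℂ} (hu : Differentiable ℝ u)
    (hu' : Differentiable ℝ (deriv u)) {v v' v'' : ℝ → ℂ} (hv : ∀ x, HasDerivAt v (v' x) x)
    (hv' : ∀ x, HasDerivAt v' (v'' x) x)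
    (hode : ∀ x, (a : ℂ) * deriv (deriv u) x + (κ : ℂ) ^ 2 * u x = a * v'' x + (κ : ℂ) ^ 2 * v x)
    (x₀ h : ℝ) :
    u (x₀ + h) - v (x₀ + h) =
      cos (ω * h) • (u x₀ - v x₀) + (sin (ω * h) / ω) • (deriv u x₀ - v' x₀) := by
  have hκωC : (κ : ℂ) ^ 2 = a * ω ^ 2 := by exact_mod_cast hκω
  refine eq_cos_smul_add_sin_smul_of_hasDerivAt hω (fun x => (hu x).hasDerivAt.sub (hv x))
    (fun x => ((hu' x).hasDerivAt.sub (hv' x)).congr_deriv ?_) x₀ h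
  rw [Complex.real_smul]
  apply mul_left_cancel₀ (Complex.ofReal_ne_zero.2 ha)
  simp only [Pi.sub_apply]
  push_cast
  linear_combination hode x + (v x - u x) * hκωC

theorem helmholtz_monomial_expansion_of_normalized_solution {a κ ω x₀ c : ℝ} {ℓ : ℕ}
    (ha : a ≠ 0) (hω : ω ≠ 0) (hc : c ≠ 0) (hκω : κ ^ 2 = a * ω ^ 2) {f f' f'' : ℝ → ℝ}
    (hf : ∀ t, HasDerivAt f (f' t) t) (hf' : ∀ t, HasDerivAt f' (f'' t) t)
    (hfode : ∀ t, f'' t + f t = c * t ^ ℓ) (hf0 : f 0 = 0) (hf'0 : f' 0 = 0) {u : ℝ → ℂ}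
    (hu : Differentiable ℝ u) (hu' : Differentiable ℝ (deriv u))
    (hode : ∀ x : ℝ, (a : ℂ) * deriv (deriv u) x + (κ : ℂ) ^ 2 * u x = ((x - x₀ : ℝ) : ℂ) ^ ℓ)
    (h : ℝ) :
    u (x₀ + h) = u x₀ * (cos (ω * h) : ℂ) + deriv u x₀ * ((sin (ω * h) / ω : ℝ) : ℂ)
      + ((f (ω * h) / (c * a * ω ^ (ℓ + 2)) : ℝ) : ℂ) := by
  set d := c * a * ω ^ (ℓ + 2)
  have hθ := hasDerivAt_mul_sub_const ω x₀
  have hv : ∀ x, HasDerivAt (fun y => ((f (ω * (y - x₀)) / d : ℝ) : ℂ))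
      ((ω * f' (ω * (x - x₀)) / d : ℝ) : ℂ) x := fun x => by
    refine (((hf _).comp x (hθ x)).div_const d).ofReal_comp.congr_deriv ?_
    ring_nf
  have hv' : ∀ x, HasDerivAt (fun y => ((ω * f' (ω * (y - x₀)) / d : ℝ) : ℂ))
      ((ω ^ 2 * f'' (ω * (x - x₀)) / d : ℝ) : ℂ) x := fun x => by
    refine ((((hf' _).comp x (hθ x)).const_mul ω).div_const d).ofReal_comp.congr_deriv ?_
    ring_nf
  have hvode : ∀ x : ℝ, a * (ω ^ 2 * f'' (ω * (x - x₀)) / d) + κ ^ 2 * (f (ω * (x - x₀)) / d)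
      = (x - x₀) ^ ℓ := fun x => by
    have := hfode (ω * (x - x₀))
    rw [mul_pow] at this
    rw [hκω]
    simp only [d]
    field_simp
    linear_combination ω ^ 2 * this
  have key := sub_eq_cos_smul_add_sin_smul_of_helmholtz ha hω hκω hu hu' hv hv'
    (fun x => by rw [hode x]; exact_mod_cast (hvode x).symm) x₀ h
  simp only [add_sub_cancel_left, sub_self, mul_zero, hf0, hf'0, zero_div, Complex.ofReal_zero,
    sub_zero, Complex.real_smul] at key
  linear_combination key

theorem div_div_mul_mul_pow_eq {K : Type*} [Field K] {h : K} (hh : h ≠ 0) (r N a ω s : K)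
    (n : ℕ) : r / (s / N * a * ω ^ n) = N * h ^ n * r / (s * a * (ω * h) ^ n) := by
  rw [mul_pow, ← mul_assoc, mul_right_comm N, mul_comm N,
    mul_div_mul_right _ _ (pow_ne_zero n hh), div_mul_eq_mul_div, div_mul_eq_mul_div,
    div_div_eq_mul_div]

/-- equation (3.13) of the paper, closed form of `F_ℓ(h)` for constant
coefficients, applied to the monomial source `f(x) = (x - x_b)^ℓ`.  Part (i) is the even
case `ℓ = 2m`, part (ii) the odd case `ℓ = 2m + 1`; `ĥ := κh/√a`. -/
theorem constant_coefficient_monomial_source_expansion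
    (a κ xb : ℝ) (ha : 0 < a) (hκ : 0 < κ) (m : ℕ) (u : ℝ → ℂ)
    (hu : Differentiable ℝ u) (hu' : Differentiable ℝ (deriv u)) :
    ((∀ x : ℝ, (a : ℂ) * deriv (deriv u) x + (κ : ℂ) ^ 2 * u x = ((x - xb : ℝ) : ℂ) ^ (2 * m)) →
      ∀ h : ℝ, h ≠ 0 →
        u (xb + h) = u xb * (Real.cos (κ * h / Real.sqrt a) : ℂ)
          + deriv u xb * ((Real.sqrt a / κ * Real.sin (κ * h / Real.sqrt a) : ℝ) : ℂ)
          + (Nat.factorial (2 * m) : ℂ) * (h : ℂ) ^ (2 * m + 2) *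
            ((Real.cos (κ * h / Real.sqrt a) : ℂ)
              - ∑ j ∈ Finset.range (m + 1),
                  (-1 : ℂ) ^ j * ((κ * h / Real.sqrt a : ℝ) : ℂ) ^ (2 * j) /
                    (Nat.factorial (2 * j) : ℂ)) /
            ((-1 : ℂ) ^ (m + 1) * (a : ℂ) * ((κ * h / Real.sqrt a : ℝ) : ℂ) ^ (2 * m + 2))) ∧
    ((∀ x : ℝ, (a : ℂ) * deriv (deriv u) x + (κ : ℂ) ^ 2 * u x
        = ((x - xb : ℝ) : ℂ) ^ (2 * m + 1)) →
      ∀ h : ℝ, h ≠ 0 →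
        u (xb + h) = u xb * (Real.cos (κ * h / Real.sqrt a) : ℂ)
          + deriv u xb * ((Real.sqrt a / κ * Real.sin (κ * h / Real.sqrt a) : ℝ) : ℂ)
          + (Nat.factorial (2 * m + 1) : ℂ) * (h : ℂ) ^ (2 * m + 3) *
            ((Real.sin (κ * h / Real.sqrt a) : ℂ)
              - ∑ j ∈ Finset.range (m + 1),
                  (-1 : ℂ) ^ j * ((κ * h / Real.sqrt a : ℝ) : ℂ) ^ (2 * j + 1) /
                    (Nat.factorial (2 * j + 1) : ℂ)) /
            ((-1 : ℂ) ^ (m + 1) * (a : ℂ) * ((κ * h / Real.sqrt a : ℝ) : ℂ) ^ (2 * m + 3))) := by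
  have hsa : 0 < √a := Real.sqrt_pos.2 ha
  set ω := κ / √a
  have hω : ω ≠ 0 := (div_pos hκ hsa).ne'
  have hκω : κ ^ 2 = a * ω ^ 2 := by
    rw [div_pow, Real.sq_sqrt ha.le]; field_simp
  have hωh : ∀ h, κ * h / √a = ω * h := fun h => by ring
  have hsin : ∀ h, √a / κ * sin (ω * h) = sin (ω * h) / ω := fun h => by
    rw [div_mul_eq_mul_div, div_div_eq_mul_div, mul_comm]
  constructor
  · intro hode h hh
    have hhC : (h : ℂ) ≠ 0 := by exact_mod_cast hh
    rw [hωh, hsin, helmholtz_monomial_expansion_of_normalized_solution ha.ne' hω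
      (c := (-1) ^ (m + 1) / (2 * m)!) (by positivity) hκω (hasDerivAt_cosTaylorRem_succ m)
      (fun t => (hasDerivAt_sinTaylorRem m t).neg) (fun t => by rw [cosTaylorRem_succ]; ring)
      (cosTaylorRem_succ_zero m) (by rw [sinTaylorRem_zero, neg_zero]) hu hu' hode h]
    congr 1
    push_cast [cosTaylorRem]
    rw [← div_div_mul_mul_pow_eq hhC]
  · intro hode h hh
    have hhC : (h : ℂ) ≠ 0 := by exact_mod_cast hh
    rw [hωh, hsin, helmholtz_monomial_expansion_of_normalized_solution ha.ne' hω
      (c := (-1) ^ (m + 1) / (2 * m + 1)!) (by positivity) hκω (hasDerivAt_sinTaylorRem (m + 1))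
      (hasDerivAt_cosTaylorRem_succ m) (fun t => by rw [sinTaylorRem_succ]; ring)
      (sinTaylorRem_zero _) (cosTaylorRem_succ_zero m) hu hu' hode h]
    congr 1
    push_cast [sinTaylorRem]
    rw [← div_div_mul_mul_pow_eq hhC]
end

section
/- Suppose a : I → ℝ and k : I → ℂ are constant functions, a > 0. Then the recursion coefficients have the closed forms: for every integer m ≥ 1, E_{2m,0} = (−k/a)^m, E_{2m,1} = 0, E_{2m+1,0} = 0, and E_{2m+1,1} = (−k/a)^m; moreover, for all integers j ≥ 2 and 0 ≤ ℓ ≤ j−2, F_{j,ℓ} = (1/a)·(−k/a)^{(j−ℓ−2)/2} if j − ℓ is even, and F_{j,ℓ} = 0 if j − ℓ is odd. -/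
open Filter Topology Asymptotics

lemma Ecoef_const (A : ℝ) (K : ℂ) :
    ∀ n, Ecoef (fun _ => A) (fun _ => K) n =
      (fun _ => if Even n then (-K / (A : ℂ)) ^ (n / 2 + 1) else 0,
       fun _ => if Even n then 0 else (-K / (A : ℂ)) ^ ((n + 1) / 2)) := by
  intro n
  induction n with
  | zero =>
      show ((fun x : ℝ => -K / (A : ℂ)), _) = _
      simp [Ecoef, deriv_const]
  | succ n ih =>
      show ((fun x : ℝ => deriv (Ecoef (fun _ => A) (fun _ => K) n).1 x - K / (A : ℂ) * (Ecoef (fun _ => A) (fun _ => K) n).2 x),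
            (fun x : ℝ => (Ecoef (fun _ => A) (fun _ => K) n).1 x + deriv (Ecoef (fun _ => A) (fun _ => K) n).2 x
              - ((deriv (fun _ => A) x : ℝ) : ℂ) / (A : ℂ) * (Ecoef (fun _ => A) (fun _ => K) n).2 x)) = _
      rw [ih]
      rcases Nat.even_or_odd n with he | ho
      · obtain ⟨t, rfl⟩ := he
        have h1 : ¬ Even (t + t + 1) := by rw [Nat.even_iff]; omega
        have h2 : (t + t) / 2 = t := by omega
        have h3 : (t + t + 1 + 1) / 2 = t + 1 := by omega
        ext x <;> simp [h1, h2, h3, deriv_const]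
      · obtain ⟨t, rfl⟩ := ho
        have h1 : Even (2 * t + 1 + 1) := by rw [Nat.even_iff]; omega
        have h2 : ¬ Even (2 * t + 1) := by rw [Nat.even_iff]; omega
        have h3 : (2 * t + 1 + 1) / 2 = t + 1 := by omega
        have h4 : (2 * t + 1 + 1) / 2 + 1 = t + 2 := by omega
        ext x <;> simp [h1, h2, h3, deriv_const] <;> ring

lemma Fcoef_const (A : ℝ) (K : ℂ) :
    ∀ n m, Fcoef (fun _ => A) (fun _ => K) n m =
      fun _ => if m = n + 1 then 1 / (A : ℂ)
        else if n + 1 < m then 0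
        else if Odd (n - m) then (-K / (A : ℂ)) ^ ((n - m + 1) / 2) / (A : ℂ) else 0 := by
  intro n
  induction n with
  | zero =>
      intro m
      match m with
      | 0 =>
          show (fun x : ℝ => (Ecoef (fun _ => A) (fun _ => K) 0).2 x / (A : ℂ)) = _
          rw [Ecoef_const]
          simp [Nat.odd_iff]
      | 1 =>
          show (fun x : ℝ => 1 / (A : ℂ)) = _
          simp
      | (m + 2) =>
          show (fun _ : ℝ => (0 : ℂ)) = _
          simp
  | succ n ih =>
      intro m
      match m with
      | 0 =>
          show (fun x : ℝ => (Ecoef (fun _ => A) (fun _ => K) (n + 1)).2 x / (A : ℂ)) = _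
          rw [Ecoef_const]
          rcases Nat.even_or_odd (n + 1) with he | ho
          · have : ¬ Odd (n + 1) := by simpa [Nat.not_odd_iff_even] using he
            simp [he, this]
          · have : ¬ Even (n + 1) := by simpa [Nat.not_even_iff_odd] using ho
            simp [this, ho]
      | (m + 1) =>
          show (fun x : ℝ => deriv (Fcoef (fun _ => A) (fun _ => K) n (m + 1)) x
              + Fcoef (fun _ => A) (fun _ => K) n m x) = _
          rw [ih (m + 1), ih m]
          have hsub : n + 1 - (m + 1) = n - m := by omega
          have h2 : (m + 1 = n + 1 + 1) ↔ (m = n + 1) := by omega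
          have h3 : (n + 1 + 1 < m + 1) ↔ (n + 1 < m) := by omega
          ext x
          simp only [deriv_const, hsub]
          rw [if_congr h2 rfl rfl, if_congr h3 rfl rfl]
          simp

/-- closed forms of the recursion coefficients for constant coefficients.
For constant `a ≡ A > 0` and `k ≡ K`:  `E_{2m,0} = (−K/A)^m`, `E_{2m,1} = 0`,
`E_{2m+1,0} = 0`, `E_{2m+1,1} = (−K/A)^m` for all `m ≥ 1`, and, for `j ≥ 2` and
`0 ≤ ℓ ≤ j−2`, `F_{j,ℓ} = (1/A)(−K/A)^{(j−ℓ−2)/2}` if `j − ℓ` is even and `F_{j,ℓ} = 0`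
otherwise, as functions on the open interval `I = (p, q)`. -/
theorem constant_coefficient_recursion_closed_forms
    (p q : ℝ) (A : ℝ) (K : ℂ) (hA : 0 < A) :
    (∀ m : ℕ, 1 ≤ m → ∀ x ∈ Set.Ioo p q,
      Ej0 (fun _ => A) (fun _ => K) (2 * m) x = (-K / (A : ℂ)) ^ m ∧
      Ej1 (fun _ => A) (fun _ => K) (2 * m) x = 0 ∧
      Ej0 (fun _ => A) (fun _ => K) (2 * m + 1) x = 0 ∧
      Ej1 (fun _ => A) (fun _ => K) (2 * m + 1) x = (-K / (A : ℂ)) ^ m) ∧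
    (∀ j ℓ : ℕ, 2 ≤ j → ℓ ≤ j - 2 → ∀ x ∈ Set.Ioo p q,
      Fjl (fun _ => A) (fun _ => K) j ℓ x =
        if Even (j - ℓ) then (1 / (A : ℂ)) * (-K / (A : ℂ)) ^ ((j - ℓ - 2) / 2) else 0) := by
    constructor
    · intro m hm x hx
      have h1 : 2 * m - 2 = 2 * (m - 1) := by omega
      have h2 : 2 * m + 1 - 2 = 2 * (m - 1) + 1 := by omega
      have he : Even (2 * (m - 1)) := ⟨m - 1, by omega⟩
      have ho : ¬ Even (2 * (m - 1) + 1) := by rw [Nat.even_iff]; omega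
      have hd1 : 2 * (m - 1) / 2 + 1 = m := by omega
      have hd2 : (2 * (m - 1) + 1 + 1) / 2 = m := by omega
      refine ⟨?_, ?_, ?_, ?_⟩ <;>
        simp only [Ej0, Ej1, h1, h2, Ecoef_const, he, ho, if_true, if_false,
          hd1, hd2] <;> simp [he, ho, hd1, hd2]
    · intro j ℓ hj hℓ x hx
      simp only [Fjl, Fcoef_const]
      rcases eq_or_lt_of_le hℓ with hcase | hcase
      · have h1 : ℓ + 1 = j - 2 + 1 := by omega
        have h2 : j - ℓ = 2 := by omega
        simp [h1, h2]
      · have h1 : ¬ (ℓ + 1 = j - 2 + 1) := by omega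
        have h2 : ¬ (j - 2 + 1 < ℓ + 1) := by omega
        have h3 : j - 2 - (ℓ + 1) = j - ℓ - 3 := by omega
        have h4 : Odd (j - ℓ - 3) ↔ Even (j - ℓ) := by
          rw [Nat.odd_iff, Nat.even_iff]; omega
        have h5 : (j - ℓ - 3 + 1) / 2 = (j - ℓ - 2) / 2 := by omega
        simp only [h1, h2, h3, h4, h5, if_false]
        rcases em (Even (j - ℓ)) with hev | hev
        · simp [hev, div_eq_mul_inv, one_div, mul_comm]
        · simp [hev]
end

section
/- Let α < β < γ be real numbers, let a : [α, γ] → ℝ be continuous with a(x) > 0 for all x, and let k : [α, γ] → ℂ be continuous. Let v : [α, γ] → ℂ be continuous with v(α) = v(γ) = 0; suppose that on each of the open intervals (α, β) and (β, γ) the function v is differentiable, the function a·v' is differentiable, and (a v')' + k v = 0; and suppose the one-sided limits L⁻ := lim_{x→β⁻} a(x)v'(x) and L⁺ := lim_{x→β⁺} a(x)v'(x) exist with L⁺ − L⁻ = 1. Assume the uniqueness property: every continuous w : [α, β] → ℂ (respectively w : [β, γ] → ℂ) that is differentiable on the open interval, with a·w' differentiable and (a w')' + k w = 0 on the open interval,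 and with w vanishing at both endpoints, is identically zero. Then v is not identically zero on (α, β), and v is not identically zero on (β, γ). -/
open Filter Topology


private lemma aux_deriv_zero {v : ℝ → ℂ} {s : Set ℝ} (hs : IsOpen s)
    (h : ∀ y ∈ s, v y = 0) {y : ℝ} (hy : y ∈ s) : deriv v y = 0 := by
  have h1 : v =ᶠ[nhds y] (fun _ => (0 : ℂ)) :=
    Filter.eventuallyEq_of_mem (hs.mem_nhds hy) h
  rw [h1.deriv_eq, deriv_const]

/-- key lemma in the proof of Theorem 2.1 of the paper, classical form.
A Dirac-assisted local solution `v` of `(a v')' + k v = δ_β` on `(α, γ)` (encoded by the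
unit jump of the flux `a·v'` across `β`) with homogeneous Dirichlet boundary conditions is
not identically zero on `(α, β)` nor on `(β, γ)`, provided the homogeneous Dirichlet
problems on the two half intervals have only the trivial solution. -/
theorem dirac_local_solution_nontrivial_on_both_sides
    (α β γ : ℝ) (hαβ : α < β) (hβγ : β < γ)
    (a : ℝ → ℝ) (haC : ContinuousOn a (Set.Icc α γ)) (hapos : ∀ y ∈ Set.Icc α γ, 0 < a y)
    (k : ℝ → ℂ) (hkC : ContinuousOn k (Set.Icc α γ))
    (v : ℝ → ℂ) (hvC : ContinuousOn v (Set.Icc α γ)) (hvα : v α = 0) (hvγ : v γ = 0)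
    (hveq : ∀ y ∈ Set.Ioo α β ∪ Set.Ioo β γ,
      DifferentiableAt ℝ v y ∧
      DifferentiableAt ℝ (fun z => (a z : ℂ) * deriv v z) y ∧
      deriv (fun z => (a z : ℂ) * deriv v z) y + k y * v y = 0)
    (Lminus Lplus : ℂ)
    (hLminus : Tendsto (fun z => (a z : ℂ) * deriv v z) (𝓝[<] β) (𝓝 Lminus))
    (hLplus : Tendsto (fun z => (a z : ℂ) * deriv v z) (𝓝[>] β) (𝓝 Lplus))
    (hjump : Lplus - Lminus = 1)
    (huniq_left : ∀ w : ℝ → ℂ, ContinuousOn w (Set.Icc α β) →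
      (∀ y ∈ Set.Ioo α β,
        DifferentiableAt ℝ w y ∧
        DifferentiableAt ℝ (fun z => (a z : ℂ) * deriv w z) y ∧
        deriv (fun z => (a z : ℂ) * deriv w z) y + k y * w y = 0) →
      w α = 0 → w β = 0 → ∀ y ∈ Set.Icc α β, w y = 0)
    (huniq_right : ∀ w : ℝ → ℂ, ContinuousOn w (Set.Icc β γ) →
      (∀ y ∈ Set.Ioo β γ,
        DifferentiableAt ℝ w y ∧
        DifferentiableAt ℝ (fun z => (a z : ℂ) * deriv w z) y ∧
        deriv (fun z => (a z : ℂ) * deriv w z) y + k y * w y = 0) →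
      w β = 0 → w γ = 0 → ∀ y ∈ Set.Icc β γ, w y = 0) :
    (∃ y ∈ Set.Ioo α β, v y ≠ 0) ∧ (∃ y ∈ Set.Ioo β γ, v y ≠ 0) := by
  have hβIcc : β ∈ Set.Icc α γ := ⟨hαβ.le, hβγ.le⟩
  constructor
  · by_contra h
    push_neg at h
    -- v = 0 on Ioo α β
    have hd : ∀ y ∈ Set.Ioo α β, deriv v y = 0 := fun y hy => aux_deriv_zero isOpen_Ioo h hy
    have hL0 : Tendsto (fun z => (a z : ℂ) * deriv v z) (𝓝[<] β) (𝓝 0) := by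
      refine Tendsto.congr' ?_ tendsto_const_nhds
      filter_upwards [Ioo_mem_nhdsLT_of_mem ⟨hαβ, le_refl β⟩] with z hz
      simp [hd z hz]
    have hLm : Lminus = 0 := tendsto_nhds_unique hLminus hL0
    have hvβ : v β = 0 := by
      haveI : (𝓝[Set.Ioo α β] β).NeBot := by
        rw [← mem_closure_iff_nhdsWithin_neBot, closure_Ioo hαβ.ne]
        exact Set.right_mem_Icc.2 hαβ.le
      have h1 : Tendsto v (𝓝[Set.Ioo α β] β) (𝓝 (v β)) :=
        (hvC β hβIcc).mono_left (nhdsWithin_mono β (fun x hx => ⟨hx.1.le, hx.2.le.trans hβγ.le⟩))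
      have h2 : Tendsto v (𝓝[Set.Ioo α β] β) (𝓝 0) := by
        refine Tendsto.congr' ?_ tendsto_const_nhds
        filter_upwards [self_mem_nhdsWithin] with z hz
        exact (h z hz).symm
      exact tendsto_nhds_unique h1 h2
    have hzero : ∀ y ∈ Set.Icc β γ, v y = 0 :=
      huniq_right v (hvC.mono (Set.Icc_subset_Icc hαβ.le le_rfl))
        (fun y hy => hveq y (Or.inr hy)) hvβ hvγ
    have hd' : ∀ y ∈ Set.Ioo β γ, deriv v y = 0 :=
      fun y hy => aux_deriv_zero isOpen_Ioo (fun z hz => hzero z ⟨hz.1.le, hz.2.le⟩) hy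
    have hL0' : Tendsto (fun z => (a z : ℂ) * deriv v z) (𝓝[>] β) (𝓝 0) := by
      refine Tendsto.congr' ?_ tendsto_const_nhds
      filter_upwards [Ioo_mem_nhdsGT_of_mem ⟨le_refl β, hβγ⟩] with z hz
      simp [hd' z hz]
    have hLp : Lplus = 0 := tendsto_nhds_unique hLplus hL0'
    rw [hLm, hLp] at hjump
    simp at hjump
  · by_contra h
    push_neg at h
    have hd : ∀ y ∈ Set.Ioo β γ, deriv v y = 0 := fun y hy => aux_deriv_zero isOpen_Ioo h hy
    have hL0 : Tendsto (fun z => (a z : ℂ) * deriv v z) (𝓝[>] β) (𝓝 0) := by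
      refine Tendsto.congr' ?_ tendsto_const_nhds
      filter_upwards [Ioo_mem_nhdsGT_of_mem ⟨le_refl β, hβγ⟩] with z hz
      simp [hd z hz]
    have hLp : Lplus = 0 := tendsto_nhds_unique hLplus hL0
    have hvβ : v β = 0 := by
      haveI : (𝓝[Set.Ioo β γ] β).NeBot := by
        rw [← mem_closure_iff_nhdsWithin_neBot, closure_Ioo hβγ.ne]
        exact Set.left_mem_Icc.2 hβγ.le
      have h1 : Tendsto v (𝓝[Set.Ioo β γ] β) (𝓝 (v β)) :=
        (hvC β hβIcc).mono_left (nhdsWithin_mono β (fun x hx => ⟨hαβ.le.trans hx.1.le, hx.2.le⟩))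
      have h2 : Tendsto v (𝓝[Set.Ioo β γ] β) (𝓝 0) := by
        refine Tendsto.congr' ?_ tendsto_const_nhds
        filter_upwards [self_mem_nhdsWithin] with z hz
        exact (h z hz).symm
      exact tendsto_nhds_unique h1 h2
    have hzero : ∀ y ∈ Set.Icc α β, v y = 0 :=
      huniq_left v (hvC.mono (Set.Icc_subset_Icc le_rfl hβγ.le))
        (fun y hy => hveq y (Or.inl hy)) hvα hvβ
    have hd' : ∀ y ∈ Set.Ioo α β, deriv v y = 0 :=
      fun y hy => aux_deriv_zero isOpen_Ioo (fun z hz => hzero z ⟨hz.1.le, hz.2.le⟩) hy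
    have hL0' : Tendsto (fun z => (a z : ℂ) * deriv v z) (𝓝[<] β) (𝓝 0) := by
      refine Tendsto.congr' ?_ tendsto_const_nhds
      filter_upwards [Ioo_mem_nhdsLT_of_mem ⟨hαβ, le_refl β⟩] with z hz
      simp [hd' z hz]
    have hLm : Lminus = 0 := tendsto_nhds_unique hLminus hL0'
    rw [hLm, hLp] at hjump
    simp at hjump
end

section
/- Let N₀ ≥ 2 be an integer and 0 = x_0 < x_1 < ⋯ < x_{N₀} = 1. Let a : [0,1] → ℝ be continuous with a(x) > 0 for all x, and let k : [0,1] → ℂ be continuous. For each 1 ≤ j ≤ N₀−1, let v_j : [0,1] → ℂ be continuous, with v_j(x) = 0 for all x ∈ [0,1] ∖ [x_{j−1}, x_{j+1}] and v_j(x_{j−1}) = v_j(x_{j+1}) = 0; suppose that on each of (x_{j−1}, x_j) and (x_j, x_{j+1}) the function v_j is differentiable, a·v_j' is differentiable, and (a v_j')' + k v_j = 0; and suppose the one-sided limits of a·v_j' at x_j exist with lim_{x→x_j⁺} a(x)v_j'(x) − lim_{x→x_j⁻} a(x)v_j'(x) = 1. Assume the uniqueness property: for every 1 ≤ j ≤ N₀−1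 and for each of the intervals [x_{j−1}, x_j] and [x_j, x_{j+1}], every continuous function w on that interval which is differentiable on its interior, with a·w' differentiable and (a w')' + k w = 0 on the interior, and which vanishes at both endpoints, is identically zero. Then v_1, …, v_{N₀−1} are linearly independent over ℂ: if μ_1, …, μ_{N₀−1} ∈ ℂ satisfy Σ_{j=1}^{N₀−1} μ_j v_j(x) = 0 for all x ∈ [0,1], then all μ_j = 0. -/
open Filter Topology

/-- linear independence assertion of Theorem 2.1 of the paper, classical
form.  The Dirac-assisted local solutions `v_1, …, v_{N₀−1}` (each solving
`(a v_j')' + k v_j = δ_{x_j}` on `(x_{j−1}, x_{j+1})`, encoded by the unit flux jump of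
`a·v_j'` across `x_j`, with homogeneous Dirichlet boundary conditions) are linearly
independent over `ℂ`, provided the homogeneous Dirichlet problems on the subintervals have
only the trivial solution. -/
theorem dirac_local_solutions_linearly_independent
    (N₀ : ℕ) (hN₀ : 2 ≤ N₀) (x : ℕ → ℝ) (hx0 : x 0 = 0) (hxN : x N₀ = 1)
    (hmono : ∀ i < N₀, x i < x (i + 1))
    (a : ℝ → ℝ) (haC : ContinuousOn a (Set.Icc 0 1))
    (hapos : ∀ y ∈ Set.Icc (0 : ℝ) 1, 0 < a y)
    (k : ℝ → ℂ) (hkC : ContinuousOn k (Set.Icc 0 1))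
    (v : ℕ → ℝ → ℂ)
    (hvC : ∀ j, 1 ≤ j → j ≤ N₀ - 1 → ContinuousOn (v j) (Set.Icc 0 1))
    (hvsupp : ∀ j, 1 ≤ j → j ≤ N₀ - 1 → ∀ y ∈ Set.Icc (0 : ℝ) 1,
      y ∉ Set.Icc (x (j - 1)) (x (j + 1)) → v j y = 0)
    (hvbc : ∀ j, 1 ≤ j → j ≤ N₀ - 1 → v j (x (j - 1)) = 0 ∧ v j (x (j + 1)) = 0)
    (hveq : ∀ j, 1 ≤ j → j ≤ N₀ - 1 →
      ∀ y ∈ Set.Ioo (x (j - 1)) (x j) ∪ Set.Ioo (x j) (x (j + 1)),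
        DifferentiableAt ℝ (v j) y ∧
        DifferentiableAt ℝ (fun z => (a z : ℂ) * deriv (v j) z) y ∧
        deriv (fun z => (a z : ℂ) * deriv (v j) z) y + k y * v j y = 0)
    (Lv Rv : ℕ → ℂ)
    (hLv : ∀ j, 1 ≤ j → j ≤ N₀ - 1 →
      Tendsto (fun z => (a z : ℂ) * deriv (v j) z) (𝓝[<] x j) (𝓝 (Lv j)))
    (hRv : ∀ j, 1 ≤ j → j ≤ N₀ - 1 →
      Tendsto (fun z => (a z : ℂ) * deriv (v j) z) (𝓝[>] x j) (𝓝 (Rv j)))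
    (hjump : ∀ j, 1 ≤ j → j ≤ N₀ - 1 → Rv j - Lv j = 1)
    (huniq : ∀ j, 1 ≤ j → j ≤ N₀ - 1 → ∀ c d : ℝ,
      ((c, d) = (x (j - 1), x j) ∨ (c, d) = (x j, x (j + 1))) →
      ∀ w : ℝ → ℂ, ContinuousOn w (Set.Icc c d) →
        (∀ y ∈ Set.Ioo c d,
          DifferentiableAt ℝ w y ∧
          DifferentiableAt ℝ (fun z => (a z : ℂ) * deriv w z) y ∧
          deriv (fun z => (a z : ℂ) * deriv w z) y + k y * w y = 0) →
        w c = 0 → w d = 0 → ∀ y ∈ Set.Icc c d, w y = 0)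
    (μ : ℕ → ℂ)
    (hzero : ∀ y ∈ Set.Icc (0 : ℝ) 1, ∑ j ∈ Finset.Icc 1 (N₀ - 1), μ j * v j y = 0) :
    ∀ j, 1 ≤ j → j ≤ N₀ - 1 → μ j = 0 := by
  -- monotonicity of the grid points
  have hxle : ∀ i j : ℕ, i ≤ j → j ≤ N₀ → x i ≤ x j := by
    intro i j hij hjN
    induction j with
    | zero => simp [Nat.le_zero.mp hij]
    | succ n ih =>
      rcases Nat.eq_or_lt_of_le hij with h | h
      · rw [h]
      · exact le_trans (ih (Nat.lt_succ_iff.mp h) (by omega))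
          (le_of_lt (hmono n (by omega)))
  have key : ∀ j, 1 ≤ j → j ≤ N₀ - 1 → (∀ i, 1 ≤ i → i < j → μ i = 0) → μ j = 0 := by
    intro j hj1 hj2 IH
    have hjN : j + 1 ≤ N₀ := by omega
    have hlt1 : x (j - 1) < x j := by
      have := hmono (j - 1) (by omega)
      rwa [Nat.sub_add_cancel hj1] at this
    have hlt2 : x j < x (j + 1) := hmono j (by omega)
    have hsub01 : ∀ y, x (j - 1) ≤ y → y ≤ x (j + 1) → y ∈ Set.Icc (0 : ℝ) 1 := by
      intro y h1 h2
      constructor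
      · calc (0 : ℝ) = x 0 := hx0.symm
          _ ≤ x (j - 1) := hxle 0 (j - 1) (by omega) (by omega)
          _ ≤ y := h1
      · calc y ≤ x (j + 1) := h2
          _ ≤ x N₀ := hxle (j + 1) N₀ hjN le_rfl
          _ = 1 := hxN
    -- on [x_{j-1}, x_j] the sum reduces to μ_j v_j
    have hsum0 : ∀ y ∈ Set.Icc (x (j - 1)) (x j), μ j * v j y = 0 := by
      intro y hy
      have hy01 : y ∈ Set.Icc (0 : ℝ) 1 :=
        hsub01 y hy.1 (le_trans hy.2 (le_of_lt hlt2))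
      have hz := hzero y hy01
      rw [Finset.sum_eq_single j] at hz
      · exact hz
      · intro i hi hne
        simp only [Finset.mem_Icc] at hi
        rcases lt_or_gt_of_ne hne with hlt | hgt
        · rw [IH i hi.1 hlt, zero_mul]
        · have hyi : y ≤ x (i - 1) :=
            le_trans hy.2 (hxle j (i - 1) (by omega) (by omega))
          rcases eq_or_lt_of_le hyi with heq | hlt'
          · rw [heq, (hvbc i hi.1 hi.2).1, mul_zero]
          · rw [hvsupp i hi.1 hi.2 y hy01 (fun hm => absurd hm.1 (not_le.2 hlt')),
              mul_zero]
      · intro hj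
        exact absurd (Finset.mem_Icc.mpr ⟨hj1, hj2⟩) hj
    by_contra hμ
    have hvz1 : ∀ y ∈ Set.Icc (x (j - 1)) (x j), v j y = 0 := fun y hy =>
      (mul_eq_zero.mp (hsum0 y hy)).resolve_left hμ
    -- v_j also vanishes on [x_j, x_{j+1}] by uniqueness
    have hvz2 : ∀ y ∈ Set.Icc (x j) (x (j + 1)), v j y = 0 := by
      apply huniq j hj1 hj2 (x j) (x (j + 1)) (Or.inr rfl) (v j)
      · exact (hvC j hj1 hj2).mono (fun y hy => hsub01 y
          (le_trans (le_of_lt hlt1) hy.1) hy.2)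
      · exact fun y hy => hveq j hj1 hj2 y (Or.inr hy)
      · exact hvz1 (x j) ⟨le_of_lt hlt1, le_rfl⟩
      · exact (hvbc j hj1 hj2).2
    -- derivative of v_j vanishes on the open intervals around x_j
    have hderiv : ∀ (c d : ℝ), (∀ y ∈ Set.Icc c d, v j y = 0) →
        ∀ y ∈ Set.Ioo c d, (fun z => (a z : ℂ) * deriv (v j) z) y = 0 := by
      intro c d hz y hy
      have hevq : v j =ᶠ[nhds y] fun _ => (0 : ℂ) :=
        Filter.eventually_of_mem (isOpen_Ioo.mem_nhds hy)
          (fun z hz' => hz z (Set.Ioo_subset_Icc_self hz'))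
      simp only
      rw [hevq.deriv_eq, deriv_const, mul_zero]
    have hLv0 : Lv j = 0 := by
      have h0 : Tendsto (fun z => (a z : ℂ) * deriv (v j) z) (𝓝[<] x j) (𝓝 0) := by
        apply Tendsto.congr' _ tendsto_const_nhds
        filter_upwards [Ioo_mem_nhdsLT_of_mem (Set.mem_Ioc.mpr ⟨hlt1, le_rfl⟩)] with z hz
        exact (hderiv _ _ hvz1 z hz).symm
      exact tendsto_nhds_unique (hLv j hj1 hj2) h0
    have hRv0 : Rv j = 0 := by
      have h0 : Tendsto (fun z => (a z : ℂ) * deriv (v j) z) (𝓝[>] x j) (𝓝 0) := by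
        apply Tendsto.congr' _ tendsto_const_nhds
        filter_upwards [Ioo_mem_nhdsGT_of_mem (Set.mem_Ico.mpr ⟨le_rfl, hlt2⟩)] with z hz
        exact (hderiv _ _ hvz2 z hz).symm
      exact tendsto_nhds_unique (hRv j hj1 hj2) h0
    have := hjump j hj1 hj2
    rw [hLv0, hRv0] at this
    simp at this
  intro j
  induction j using Nat.strong_induction_on with
  | _ j IHs =>
    intro hj1 hj2
    exact key j hj1 hj2 fun i hi1 hij => IHs i hij hi1 (by omega)
end
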